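/- arXiv:1608.06703 — 6 statements merged into one kernel-verified Lean document; each statement's English description precedes it below -/
import Mathlib

section
/- For every integer n ≥ 1, the group given by the presentation ⟨a, b ∣ abab⁻¹a⁻¹b⁻¹, aⁿb⁻⁽ⁿ⁺¹⁾⟩ is the trivial group; that is, the quotient of the free group on {a, b} by the normal closure of the two relators abab⁻¹a⁻¹b⁻¹ and aⁿb⁻⁽ⁿ⁺¹⁾ has exactly one element. -/
private lemma aux_triv {G : Type*} [Group G] (a b : G) (n : ℕ)
    (h1 : a * b * a = b * a * b) (h2 : a ^ n = b ^ (n + 1)) : a = 1 ∧ b = 1 := by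
  have hcomm : Commute b (a ^ n) := by
    rw [h2]; exact (Commute.self_pow b (n + 1))
  have hconj : (a * b) * a * (a * b)⁻¹ = b := by
    rw [mul_inv_rev]
    calc a * b * a * (b⁻¹ * a⁻¹) = (a * b * a) * b⁻¹ * a⁻¹ := by group
    _ = (b * a * b) * b⁻¹ * a⁻¹ := by rw [h1]
    _ = b := by group
  have hconjn : (a * b) * a ^ n * (a * b)⁻¹ = b ^ n := by
    calc (a * b) * a ^ n * (a * b)⁻¹ = ((a * b) * a * (a * b)⁻¹) ^ n := conj_pow.symm
    _ = b ^ n := by rw [hconj]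
  have hcomm2 : Commute (a * b) (a ^ n) :=
    Commute.mul_left (Commute.self_pow a n) hcomm
  have han : a ^ n = b ^ n := by
    rw [← hconjn, hcomm2.eq]; group
  have hb : b = 1 := by
    have : b ^ n * b = b ^ n * 1 := by
      rw [mul_one, ← pow_succ, ← h2, han]
    exact mul_left_cancel this
  have ha : a = 1 := by
    have := h1
    rw [hb, mul_one, one_mul, mul_one] at this
    have : a * a = a * 1 := by rw [mul_one]; exact this
    exact mul_left_cancel this
  exact ⟨ha, hb⟩

/-- The presentation `⟨a, b ∣ abab⁻¹a⁻¹b⁻¹, aⁿb⁻⁽ⁿ⁺¹⁾⟩`, where `a` and `b` are the two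
free generators, describes the trivial group for every `n ≥ 1`. -/
theorem trivial_group_presentation (n : ℕ) (hn : 1 ≤ n) :
    Nat.card (PresentedGroup
      ({FreeGroup.of 0 * FreeGroup.of 1 * FreeGroup.of 0 * (FreeGroup.of 1)⁻¹ *
          (FreeGroup.of 0)⁻¹ * (FreeGroup.of 1)⁻¹,
        FreeGroup.of 0 ^ n * (FreeGroup.of 1 ^ (n + 1))⁻¹} : Set (FreeGroup (Fin 2)))) = 1 := by
  set rels : Set (FreeGroup (Fin 2)) :=
    {FreeGroup.of 0 * FreeGroup.of 1 * FreeGroup.of 0 * (FreeGroup.of 1)⁻¹ *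
        (FreeGroup.of 0)⁻¹ * (FreeGroup.of 1)⁻¹,
      FreeGroup.of 0 ^ n * (FreeGroup.of 1 ^ (n + 1))⁻¹} with hrels
  have hrel : ∀ r ∈ rels, PresentedGroup.mk rels r = 1 := fun r hr =>
    (QuotientGroup.eq_one_iff r).mpr (Subgroup.subset_normalClosure hr)
  set a : PresentedGroup rels := PresentedGroup.of 0 with ha
  set b : PresentedGroup rels := PresentedGroup.of 1 with hb
  have h1 : a * b * a = b * a * b := by
    have := hrel _ (Set.mem_insert _ _)
    simp only [map_mul, map_inv] at this
    change a * b * a * b⁻¹ * a⁻¹ * b⁻¹ = 1 at this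
    calc a * b * a = (a * b * a * b⁻¹ * a⁻¹ * b⁻¹) * (b * a * b) := by group
    _ = b * a * b := by rw [this]; group
  have h2 : a ^ n = b ^ (n + 1) := by
    have := hrel _ (Set.mem_insert_of_mem _ rfl)
    simp only [map_mul, map_inv, map_pow] at this
    change a ^ n * (b ^ (n + 1))⁻¹ = 1 at this
    rwa [mul_inv_eq_one] at this
  obtain ⟨ha1, hb1⟩ := aux_triv a b n h1 h2
  have htriv : ∀ x : PresentedGroup rels, x = 1 := by
    refine fun x => Subgroup.mem_bot.mp (PresentedGroup.generated_by rels ⊥ (fun j => ?_) x)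
    fin_cases j
    · exact Subgroup.mem_bot.mpr ha1
    · exact Subgroup.mem_bot.mpr hb1
  rw [Nat.card_eq_one_iff_unique]
  exact ⟨⟨fun x y => by rw [htriv x, htriv y]⟩, ⟨1⟩⟩
end

section
/- Let G be a group and let a, b ∈ G satisfy a·b·a = b·a·b and aⁿ = bⁿ⁺¹ for some integer n ≥ 1. Then a = 1 and b = 1. -/
private lemma pow_comm_aux {G : Type*} [Group G] (x y d : G) (h : x * d = d * y) :
    ∀ k : ℕ, x ^ k * d = d * y ^ k := by
  intro k
  induction k with
  | zero => simp
  | succ k ih =>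
      calc x ^ (k+1) * d = x ^ k * (x * d) := by rw [pow_succ]; group
        _ = x ^ k * (d * y) := by rw [h]
        _ = (x ^ k * d) * y := by group
        _ = d * (y ^ k * y) := by rw [ih]; group
        _ = d * y ^ (k+1) := by rw [← pow_succ]

/-- In any group, if `a·b·a = b·a·b` and `aⁿ = bⁿ⁺¹` for some `n ≥ 1`,
then `a` and `b` are both trivial. -/
theorem braid_and_power_relation_trivial {G : Type*} [Group G] (a b : G) (n : ℕ)
    (hn : 1 ≤ n) (h1 : a * b * a = b * a * b) (h2 : a ^ n = b ^ (n + 1)) :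
    a = 1 ∧ b = 1 := by
  have ha : a * (a * b * a) = (a * b * a) * b := by
    calc a * (a * b * a) = a * (b * a * b) := by rw [h1]
      _ = (a * b * a) * b := by group
  have hb : b * (a * b * a) = (a * b * a) * a := by
    calc b * (a * b * a) = (b * a * b) * a := by group
      _ = (a * b * a) * a := by rw [h1]
  -- b^n = a^(n+1)
  have h3 : b ^ n = a ^ (n + 1) := by
    have e1 := pow_comm_aux b a _ hb n
    have e2 := pow_comm_aux a b _ ha (n+1)
    have : b ^ n * (a * b * a) = a ^ (n+1) * (a * b * a) := by rw [e1, e2, h2]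
    exact mul_right_cancel this
  -- a^(2n+1) = 1
  have h4 : a ^ (2 * n + 1) = 1 := by
    have e : a ^ (n * n) = a ^ ((n + 1) * (n + 1)) := by
      calc a ^ (n * n) = (a ^ n) ^ n := by rw [pow_mul]
        _ = (b ^ (n+1)) ^ n := by rw [h2]
        _ = (b ^ n) ^ (n+1) := by rw [← pow_mul, ← pow_mul, Nat.mul_comm]
        _ = (a ^ (n+1)) ^ (n+1) := by rw [h3]
        _ = a ^ ((n+1) * (n+1)) := by rw [pow_mul]
    have e2 : a ^ ((n+1) * (n+1)) = a ^ (n * n) * a ^ (2 * n + 1) := by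
      rw [← pow_add]; ring_nf
    have : a ^ (n * n) * 1 = a ^ (n * n) * a ^ (2 * n + 1) := by
      rw [mul_one, ← e2, e]
    exact (mul_left_cancel this).symm
  -- b = a⁻¹
  have h5 : b = a⁻¹ := by
    have e : a ^ n * (a * b) = a ^ n * 1 := by
      calc a ^ n * (a * b) = a ^ (n+1) * b := by rw [pow_succ]; group
        _ = b ^ n * b := by rw [h3]
        _ = b ^ (n+1) := by rw [pow_succ]
        _ = a ^ n := h2.symm
        _ = a ^ n * 1 := by rw [mul_one]
    have hab : a * b = 1 := mul_left_cancel e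
    calc b = a⁻¹ * (a * b) := by group
      _ = a⁻¹ * 1 := by rw [hab]
      _ = a⁻¹ := mul_one _
  -- a = a⁻¹, so a² = 1
  have h6 : a * a = 1 := by
    have e : a * b * a = a := by rw [h5]; group
    have e2 : b * a * b = a⁻¹ := by rw [h5]; group
    have h7 : a = a⁻¹ := by rw [e] at h1; rw [e2] at h1; exact h1
    calc a * a = a⁻¹ * a := by rw [← h7]
      _ = 1 := by group
  have ha1 : a = 1 := by
    have : a ^ (2 * n + 1) = a := by
      rw [pow_succ, two_mul, pow_add]
      have : a ^ n * a ^ n = 1 := by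
        rw [← pow_add, ← two_mul, pow_mul]
        have : a ^ 2 = 1 := by rw [pow_two]; exact h6
        rw [this, one_pow]
      rw [this, one_mul]
    rw [h4] at this; exact this.symm
  exact ⟨ha1, by rw [h5, ha1]; group⟩
end

section
/- Fix real numbers q > 0 and p ∈ (0,1), and define c : ℕ → ℝ by c_n = 3^{n − q·nᵖ}. Then (i) limsup_{n→∞} c_n^{1/n} = 3, and (ii) the function R(n) = min{ k ∈ ℕ : c_{2k+2}/c_{2k} > 9 − 1/n } satisfies R(n) / (9·(ln 3)·q·p·2ᵖ·n)^{1/(1−p)} → 1 as n → ∞. -/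
/-!
Part (i): `cₙ^{1/n} = 3^{1 - q n^{p-1}}` and `n^{p-1} → 0`.

Part (ii): `c_{2k+2} / c_{2k} = 9 · 3^{-q 2ᵖ ((k+1)ᵖ - kᵖ)}`, so `R(n)` is the first `k` at which the
increment `(k+1)ᵖ - kᵖ` drops below `δₙ = -log (1 - 1/(9n)) / (q 2ᵖ log 3)`. Bernoulli's inequality
squeezes that increment between `p (k+1)^{p-1}` and `p k^{p-1}`, which pins `R(n)` to within `1` of
`(p / δₙ)^{1/(1-p)}`, and `n δₙ → 1 / (9 q 2ᵖ log 3)` gives the asymptotics.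
-/

/-- The hypothetical reduced-cogrowth sequence `cₙ = 3^{n − q·nᵖ}`. -/
noncomputable def hypCogrowth (q p : ℝ) (n : ℕ) : ℝ :=
  (3 : ℝ) ^ ((n : ℝ) - q * (n : ℝ) ^ p)

/-- `R(n) = min { k ∈ ℕ : c_{2k+2}/c_{2k} > 9 − 1/n }` for the hypothetical sequence. -/
noncomputable def hypR (q p : ℝ) (n : ℕ) : ℕ :=
  sInf {k : ℕ | hypCogrowth q p (2 * k + 2) / hypCogrowth q p (2 * k) > 9 - 1 / (n : ℝ)}

open Filter Topology Real

namespace Real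

variable {p : ℝ}

lemma rpow_add_one_sub_rpow_le (hp0 : 0 ≤ p) (hp1 : p ≤ 1) {a : ℝ} (ha : 0 < a) :
    (a + 1) ^ p - a ^ p ≤ p * a ^ (p - 1) := by
  have hbern := rpow_one_add_le_one_add_mul_self (s := a⁻¹) (by linarith [inv_pos.2 ha]) hp0 hp1
  have hsplit : (a + 1) ^ p = a ^ p * (1 + a⁻¹) ^ p := by
    rw [← mul_rpow ha.le (by positivity)]; congr 1; field_simp
  have := mul_le_mul_of_nonneg_left hbern (rpow_nonneg ha.le p)
  rw [hsplit, rpow_sub_one ha.ne', div_eq_mul_inv]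
  linarith

lemma le_rpow_add_one_sub_rpow (hp0 : 0 ≤ p) (hp1 : p ≤ 1) {a : ℝ} (ha : 0 ≤ a) :
    p * (a + 1) ^ (p - 1) ≤ (a + 1) ^ p - a ^ p := by
  have hb : 0 < a + 1 := by linarith
  have hinv : (a + 1)⁻¹ ≤ 1 := inv_le_one_of_one_le₀ (by linarith)
  have hbern := rpow_one_add_le_one_add_mul_self (s := -(a + 1)⁻¹) (by linarith) hp0 hp1
  have hsplit : a ^ p = (a + 1) ^ p * (1 + -(a + 1)⁻¹) ^ p := by
    rw [← mul_rpow hb.le (by linarith)]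
    congr 1; field_simp; ring
  have := mul_le_mul_of_nonneg_left hbern (rpow_nonneg hb.le p)
  rw [hsplit, rpow_sub_one hb.ne', div_eq_mul_inv]
  linarith

lemma mul_rpow_sub_one_lt_iff (hp1 : p < 1) {c ε m : ℝ} (hc : 0 ≤ c) (hε : 0 < ε) (hm : 0 < m) :
    c * m ^ (p - 1) < ε ↔ (c / ε) ^ (1 - p)⁻¹ < m := by
  have hm' : 0 < m ^ (1 - p) := rpow_pos_of_pos hm _
  rw [rpow_inv_lt_iff_of_pos (by positivity) hm.le (by linarith), div_lt_iff₀ hε,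
    ← neg_sub, rpow_neg hm.le, ← div_eq_mul_inv, div_lt_iff₀ hm', mul_comm]

end Real

lemma abs_natCast_sInf_sub_le_one {S : Set ℕ} {x : ℝ} (hx : 0 ≤ x)
    (hsuff : ∀ k : ℕ, x < k → k ∈ S) (hnec : ∀ k ∈ S, x < k + 1) :
    |((sInf S : ℕ) : ℝ) - x| ≤ 1 := by
  have hmem : ⌊x⌋₊ + 1 ∈ S := hsuff _ (by push_cast; exact Nat.lt_floor_add_one x)
  have hlow : x < (sInf S : ℕ) + 1 := hnec _ (Nat.sInf_mem ⟨_, hmem⟩)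
  have hup : ((sInf S : ℕ) : ℝ) ≤ ⌊x⌋₊ + 1 := by exact_mod_cast Nat.sInf_le hmem
  rw [abs_sub_le_iff]
  constructor <;> linarith [Nat.floor_le hx]

lemma abs_sInf_rpow_add_one_sub_rpow_lt_sub_le_one {p δ : ℝ} (hp0 : 0 ≤ p) (hp1 : p < 1)
    (hδ : 0 < δ) :
    |((sInf {k : ℕ | ((k : ℝ) + 1) ^ p - (k : ℝ) ^ p < δ} : ℕ) : ℝ) - (p / δ) ^ (1 - p)⁻¹| ≤ 1 := by
  apply abs_natCast_sInf_sub_le_one (by positivity)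
  · intro k hk
    have hk0 : (0 : ℝ) < k := lt_of_le_of_lt (by positivity) hk
    exact (rpow_add_one_sub_rpow_le hp0 hp1.le hk0).trans_lt
      ((mul_rpow_sub_one_lt_iff hp1 hp0 hδ hk0).2 hk)
  · intro k hk
    exact (mul_rpow_sub_one_lt_iff hp1 hp0 hδ (by positivity)).1
      ((le_rpow_add_one_sub_rpow hp0 hp1.le k.cast_nonneg).trans_lt hk)

lemma tendsto_div_of_abs_sub_le {ι : Type*} {l : Filter ι} {a x D : ι → ℝ} {L C : ℝ}
    (hx : Tendsto (fun i => x i / D i) l (𝓝 L)) (hD : Tendsto D l atTop)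
    (hax : ∀ᶠ i in l, |a i - x i| ≤ C) :
    Tendsto (fun i => a i / D i) l (𝓝 L) := by
  have herr : Tendsto (fun i => (a i - x i) / D i) l (𝓝 0) := by
    refine squeeze_zero_norm' ?_ (by simpa using hD.inv_tendsto_atTop.const_mul C)
    filter_upwards [hax, hD.eventually_gt_atTop 0] with i hi hDi
    rw [norm_eq_abs, abs_div, abs_of_pos hDi, div_eq_mul_inv]
    exact mul_le_mul_of_nonneg_right hi (inv_nonneg.2 hDi.le)
  simpa [sub_div] using hx.add herr

noncomputable def hypThreshold (q p : ℝ) (n : ℕ) : ℝ :=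
  -log (1 - 1 / (9 * n)) / (log 3 * q * 2 ^ p)

lemma one_sub_one_div_nine_mul_pos (n : ℕ) : 0 < 1 - 1 / (9 * (n : ℝ)) := by
  rcases n.eq_zero_or_pos with rfl | hn
  · simp
  · have : 1 / (9 * (n : ℝ)) < 1 := by
      rw [div_lt_one (by positivity)]
      have : (1 : ℝ) ≤ n := by exact_mod_cast hn
      linarith
    linarith

lemma hypThreshold_pos {q : ℝ} (p : ℝ) (hq : 0 < q) {n : ℕ} (hn : 0 < n) :
    0 < hypThreshold q p n := by
  have hlog : log (1 - 1 / (9 * (n : ℝ))) < 0 :=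
    log_neg (one_sub_one_div_nine_mul_pos n) (sub_lt_self _ (by positivity))
  unfold hypThreshold
  exact div_pos (by linarith) (by positivity)

lemma hypCogrowth_two_mul_add_two_div (q p : ℝ) (k : ℕ) :
    hypCogrowth q p (2 * k + 2) / hypCogrowth q p (2 * k) =
      9 * 3 ^ (-(q * 2 ^ p * (((k : ℝ) + 1) ^ p - (k : ℝ) ^ p))) := by
  have h2k : ((2 * k + 2 : ℕ) : ℝ) ^ p = 2 ^ p * ((k : ℝ) + 1) ^ p := by
    rw [← mul_rpow (by norm_num) (by positivity)]; push_cast; ring_nf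
  have h2 : ((2 * k : ℕ) : ℝ) ^ p = 2 ^ p * (k : ℝ) ^ p := by
    rw [← mul_rpow (by norm_num) (by positivity)]; push_cast; ring_nf
  rw [hypCogrowth, hypCogrowth, ← rpow_sub (by norm_num), h2k, h2,
    show (9 : ℝ) = 3 ^ (2 : ℝ) by norm_num, ← rpow_add (by norm_num)]
  push_cast
  ring_nf

lemma hypR_eq_sInf {q : ℝ} (p : ℝ) (hq : 0 < q) (n : ℕ) :
    hypR q p n = sInf {k : ℕ | ((k : ℝ) + 1) ^ p - (k : ℝ) ^ p < hypThreshold q p n} := by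
  have ht := one_sub_one_div_nine_mul_pos n
  have hscale : 0 < log 3 * q * 2 ^ p := by positivity
  unfold hypR
  congr 1
  ext k
  rw [Set.mem_ofPred_eq, Set.mem_ofPred_eq, hypCogrowth_two_mul_add_two_div, gt_iff_lt,
    show (9 : ℝ) - 1 / n = 9 * (1 - 1 / (9 * n)) by field_simp,
    mul_lt_mul_iff_right₀ (by norm_num), lt_rpow_iff_log_lt ht (by norm_num), hypThreshold,
    lt_div_iff₀ hscale]
  constructor <;> intro h <;> linarith

lemma tendsto_natCast_mul_hypThreshold (q p : ℝ) :
    Tendsto (fun n : ℕ => n * hypThreshold q p n) atTop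
      (𝓝 (9 * log 3 * q * 2 ^ p)⁻¹) := by
  have h := ((tendsto_mul_log_one_add_div_atTop (-(1 / 9))).comp
    tendsto_natCast_atTop_atTop).neg.div_const (log 3 * q * 2 ^ p)
  convert h using 2 with n
  · simp only [Function.comp_apply, hypThreshold]
    rw [show (1 : ℝ) + -(1 / 9) / n = 1 - 1 / (9 * n) by ring]
    ring
  · rw [neg_neg, div_div, one_div]
    ring

lemma limsup_hypCogrowth_rpow_inv (q : ℝ) {p : ℝ} (hp1 : p < 1) :
    limsup (fun n : ℕ => hypCogrowth q p n ^ (n : ℝ)⁻¹) atTop = 3 := by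
  have hdecay : Tendsto (fun n : ℕ => (n : ℝ) ^ (p - 1)) atTop (𝓝 0) := by
    simpa [Function.comp_def, neg_sub] using
      (tendsto_rpow_neg_atTop (by linarith : 0 < 1 - p)).comp tendsto_natCast_atTop_atTop
  have hlim : Tendsto (fun n : ℕ => (3 : ℝ) ^ (1 - q * (n : ℝ) ^ (p - 1))) atTop (𝓝 3) := by
    simpa using (tendsto_const_nhds (x := (3 : ℝ))).rpow
      ((tendsto_const_nhds (x := (1 : ℝ))).sub (hdecay.const_mul q))
      (Or.inl (by norm_num : (3 : ℝ) ≠ 0))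
  refine (hlim.congr' ?_).limsup_eq
  filter_upwards [eventually_gt_atTop 0] with n hn
  have hn0 : (0 : ℝ) < n := by exact_mod_cast hn
  rw [hypCogrowth, ← rpow_mul (by norm_num), sub_mul, mul_inv_cancel₀ hn0.ne', mul_assoc,
    rpow_sub_one hn0.ne', div_eq_mul_inv]

lemma tendsto_hypR_div {q p : ℝ} (hq : 0 < q) (hp0 : 0 < p) (hp1 : p < 1) :
    Tendsto (fun n : ℕ => (hypR q p n : ℝ) /
      (9 * log 3 * q * p * 2 ^ p * n) ^ (1 - p)⁻¹) atTop (𝓝 1) := by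
  set r := (1 - p)⁻¹
  set c := 9 * log 3 * q * p * 2 ^ p
  have hc : 0 < c := by positivity
  refine tendsto_div_of_abs_sub_le (x := fun n => (p / hypThreshold q p n) ^ r) (C := 1)
    ?_ ((tendsto_rpow_atTop (by positivity)).comp
      (tendsto_natCast_atTop_atTop.const_mul_atTop hc)) ?_
  · have hlim : Tendsto (fun n : ℕ => (p / (c * (n * hypThreshold q p n))) ^ r) atTop (𝓝 1) := by
      have hval : p / (c * (9 * log 3 * q * 2 ^ p)⁻¹) = 1 := by
        field_simp
        ring
      have := (tendsto_const_nhds.div ((tendsto_natCast_mul_hypThreshold q p).const_mul c)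
        (by positivity)).rpow_const (p := r) (Or.inl (hval ▸ one_ne_zero))
      rwa [hval, one_rpow] at this
    refine hlim.congr' ?_
    filter_upwards [eventually_gt_atTop 0] with n hn
    rw [← div_rpow (div_pos hp0 (hypThreshold_pos p hq hn)).le (by positivity)]
    congr 1
    field_simp
  · filter_upwards [eventually_gt_atTop 0] with n hn
    rw [hypR_eq_sInf p hq]
    exact abs_sInf_rpow_add_one_sub_rpow_lt_sub_le_one hp0.le hp1 (hypThreshold_pos p hq hn)

/-- For `cₙ = 3^{n − q·nᵖ}` with `q > 0` and `0 < p < 1`: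
(i) `limsup cₙ^{1/n} = 3`, and
(ii) `R(n) / (9·ln(3)·q·p·2ᵖ·n)^{1/(1−p)} → 1` as `n → ∞`. -/
theorem hyp_cogrowth_props (q p : ℝ) (hq : 0 < q) (hp0 : 0 < p) (hp1 : p < 1) :
    Filter.limsup (fun n : ℕ => (hypCogrowth q p n) ^ ((n : ℝ)⁻¹)) Filter.atTop = 3 ∧
    Filter.Tendsto
      (fun n : ℕ => (hypR q p n : ℝ) /
        (9 * Real.log 3 * q * p * (2 : ℝ) ^ p * (n : ℝ)) ^ ((1 - p)⁻¹))
      Filter.atTop (nhds 1) :=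
  ⟨limsup_hypCogrowth_rpow_inv q hp1, tendsto_hypR_div hq hp0 hp1⟩
end

section
/- Let d : ℕ → ℝ be a sequence of positive reals and s > 0 a real number such that the ratio sequence r_k = d_{2k+2}/d_{2k} is nondecreasing in k, satisfies r_k < s for all k, and sup_k r_k = s. Let f : ℕ → ℕ be nondecreasing with f(n) → ∞, and suppose that n·(s − r_{f(n)}) → 1 as n → ∞. Then the function R′(n) = min{ k : r_k > s − 1/n } is asymptotically equivalent to f, i.e., R′ ∼ f. -/
/-- `f ≾ g`: there are constants `a, b > 0` with `f(n) ≤ a·g(⌈bn⌉)` for all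
sufficiently large `n`. -/
def AsympLE (f g : ℕ → ℝ) : Prop :=
  ∃ a b : ℝ, 0 < a ∧ 0 < b ∧ ∀ᶠ n : ℕ in Filter.atTop, f n ≤ a * g ⌈b * (n : ℝ)⌉₊

/-- `f ∼ g`: `f ≾ g` and `g ≾ f`. -/
def AsympEquiv (f g : ℕ → ℝ) : Prop :=
  AsympLE f g ∧ AsympLE g f

/-- If the ratio sequence `r_k = d_{2k+2}/d_{2k}` is nondecreasing with supremum `s`
(and `r_k < s` for all `k`), `f` is nondecreasing and tends to infinity, and
`n·(s − r_{f(n)}) → 1`, then `R′(n) = min{ k : r_k > s − 1/n }` satisfies `R′ ∼ f`. -/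
theorem Rprime_asymp_of_ratio_limit (d : ℕ → ℝ) (hd : ∀ n, 0 < d n) (s : ℝ) (hs : 0 < s)
    (r : ℕ → ℝ) (hr : ∀ k, r k = d (2 * k + 2) / d (2 * k))
    (hmono : Monotone r) (hlt : ∀ k, r k < s) (hsup : (⨆ k, r k) = s)
    (f : ℕ → ℕ) (hf : Monotone f) (hftop : Filter.Tendsto f Filter.atTop Filter.atTop)
    (hlim : Filter.Tendsto (fun n : ℕ => (n : ℝ) * (s - r (f n))) Filter.atTop (nhds 1)) :
    AsympEquiv (fun n : ℕ => (((sInf {k : ℕ | r k > s - 1 / (n : ℝ)} : ℕ)) : ℝ))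
      (fun n : ℕ => (f n : ℝ)) := by
  have hSne : ∀ m : ℕ, 1 ≤ m → {k : ℕ | r k > s - 1 / (m : ℝ)}.Nonempty := by
    intro m hm
    have hm0 : (0 : ℝ) < 1 / (m : ℝ) := by
      have : (0 : ℝ) < (m : ℝ) := by exact_mod_cast hm
      positivity
    have h1 : s - 1 / (m : ℝ) < ⨆ k, r k := by rw [hsup]; linarith
    obtain ⟨k, hk⟩ := exists_lt_of_lt_ciSup h1
    exact ⟨k, hk⟩
  have hceil : ∀ n : ℕ, ⌈(2 : ℝ) * n⌉₊ = 2 * n := by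
    intro n
    rw [show (2 : ℝ) * n = ((2 * n : ℕ) : ℝ) by push_cast; ring, Nat.ceil_natCast]
  constructor
  · refine ⟨1, 2, one_pos, two_pos, ?_⟩
    have h1 : ∀ᶠ m : ℕ in Filter.atTop, (m : ℝ) * (s - r (f m)) < 3 / 2 :=
      hlim.eventually_lt_const (by norm_num)
    rw [Filter.eventually_atTop] at h1
    obtain ⟨N, hN⟩ := h1
    filter_upwards [Filter.eventually_ge_atTop (max N 1)] with n hn
    have hn1 : 1 ≤ n := le_trans (le_max_right N 1) hn
    have hnN : N ≤ n := le_trans (le_max_left N 1) hn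
    simp only [hceil n]
    set m := 2 * n with hm
    have key := hN m (by omega)
    have hpos : 0 < s - r (f m) := by have := hlt (f m); linarith
    have hn0 : (0 : ℝ) < (n : ℝ) := by exact_mod_cast hn1
    have hmr : (m : ℝ) = 2 * (n : ℝ) := by rw [hm]; push_cast; ring
    rw [hmr] at key
    have h2 : s - r (f m) < 1 / (n : ℝ) := by
      rw [lt_div_iff₀ hn0]; nlinarith
    have hmem : f m ∈ {k : ℕ | r k > s - 1 / (n : ℝ)} := by
      simp only [Set.mem_setOf_eq]; linarith
    have hle := Nat.sInf_le hmem
    have : ((sInf {k : ℕ | r k > s - 1 / (n : ℝ)} : ℕ) : ℝ) ≤ (f m : ℝ) := by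
      exact_mod_cast hle
    linarith
  · refine ⟨1, 2, one_pos, two_pos, ?_⟩
    have h1 : ∀ᶠ m : ℕ in Filter.atTop, 1 / 2 < (m : ℝ) * (s - r (f m)) :=
      hlim.eventually_const_lt (by norm_num)
    rw [Filter.eventually_atTop] at h1
    obtain ⟨N, hN⟩ := h1
    filter_upwards [Filter.eventually_ge_atTop (max N 1)] with n hn
    have hn1 : 1 ≤ n := le_trans (le_max_right N 1) hn
    have hnN : N ≤ n := le_trans (le_max_left N 1) hn
    simp only [hceil n]
    set m := 2 * n with hm
    have key := hN n hnN
    have hn0 : (0 : ℝ) < (n : ℝ) := by exact_mod_cast hn1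
    have hmr : (m : ℝ) = 2 * (n : ℝ) := by rw [hm]; push_cast; ring
    have h2 : 1 / (m : ℝ) < s - r (f n) := by
      rw [hmr, div_lt_iff₀ (by linarith)]; nlinarith
    have hgoal : f n ≤ sInf {k : ℕ | r k > s - 1 / (m : ℝ)} := by
      apply le_csInf (hSne m (by omega))
      intro k hk
      by_contra hcon
      push_neg at hcon
      have hrk : r k ≤ r (f n) := hmono (le_of_lt hcon)
      simp only [Set.mem_setOf_eq] at hk
      linarith
    have : (f n : ℝ) ≤ ((sInf {k : ℕ | r k > s - 1 / (m : ℝ)} : ℕ) : ℝ) := by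
      exact_mod_cast hgoal
    linarith
end

section
/- Let G be a finite group with a nonempty finite symmetric generating set S. Then the function R′ associated to (G, S) is at most logarithmic: there exists a constant C > 0 such that R′(n) ≤ C·log(n) for all n ≥ 2. -/
/-- The cogrowth function of a group `G` with respect to a generating set `S`:
`cogrowth G S n` is the number of words of length `n` in the letters of `S`
whose product in `G` is the identity. -/
noncomputable def cogrowth (G : Type*) [Group G] (S : Set G) (n : ℕ) : ℕ :=
  Nat.card {w : Fin n → S // (List.ofFn fun i => ((w i : G))).prod = 1}

/-- `D = limsup dₙ^{1/n}`, the asymptotic cogrowth rate. -/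
noncomputable def cogrowthRate (G : Type*) [Group G] (S : Set G) : ℝ :=
  Filter.limsup (fun n : ℕ => (cogrowth G S n : ℝ) ^ ((n : ℝ)⁻¹)) Filter.atTop

/-- `R′(n) = min { k : d_{2k+2}/d_{2k} > D² − 1/n }`. -/
noncomputable def Rprime (G : Type*) [Group G] (S : Set G) (n : ℕ) : ℕ :=
  sInf {k : ℕ |
    (cogrowth G S (2 * k + 2) : ℝ) / (cogrowth G S (2 * k) : ℝ) >
      (cogrowthRate G S) ^ 2 - 1 / (n : ℝ)}

/-- The reduced-cogrowth function of a group presented as a quotient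
`φ : FreeGroup X →* G`: the number of elements of the free group of reduced
word length `n` that map to the identity of `G`. -/
noncomputable def redCogrowth {X : Type*} [DecidableEq X] {G : Type*} [Group G]
    (φ : FreeGroup X →* G) (n : ℕ) : ℕ :=
  Nat.card {w : FreeGroup X // (FreeGroup.toWord w).length = n ∧ φ w = 1}

/-- `C = limsup cₙ^{1/n}`, the asymptotic reduced-cogrowth rate. -/
noncomputable def redCogrowthRate {X : Type*} [DecidableEq X] {G : Type*} [Group G]
    (φ : FreeGroup X →* G) : ℝ :=
  Filter.limsup (fun n : ℕ => (redCogrowth φ n : ℝ) ^ ((n : ℝ)⁻¹)) Filter.atTop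

/-- `R(n) = min { k : c_{2k+2}/c_{2k} > C² − 1/n }`. -/
noncomputable def RR {X : Type*} [DecidableEq X] {G : Type*} [Group G]
    (φ : FreeGroup X →* G) (n : ℕ) : ℕ :=
  sInf {k : ℕ |
    (redCogrowth φ (2 * k + 2) : ℝ) / (redCogrowth φ (2 * k) : ℝ) >
      (redCogrowthRate φ) ^ 2 - 1 / (n : ℝ)}

/-!
Let `A` be the adjacency matrix of the Cayley graph of `(G, S)`, so that `d n = (A ^ n) 1 1`.
Since `S` is symmetric, `A` is symmetric and the spectral theorem gives `d n = ∑ cᵢ μᵢⁿ` with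
`cᵢ ≥ 0` and `∑ cᵢ = d 0 = 1`. Let `M` be the largest `μᵢ²` with `cᵢ ≠ 0` and `ρ < M` the next
one. On the one hand `d n ≤ (√M)ⁿ`, so `D² ≤ M`; on the other hand
`d (2k+2) / d (2k) ≥ M - K (ρ / M)ᵏ` for a constant `K`. Hence `R′(n)` is at most the first `k`
with `K (ρ / M)ᵏ < 1 / n`, which is `O(log n)`.
-/

open Finset Real Filter

theorem Matrix.IsHermitian.exists_pow_apply_self_eq_sum {n : Type*} [Fintype n] [DecidableEq n]
    {A : Matrix n n ℝ} (hA : A.IsHermitian) (j : n) :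
    ∃ c : n → ℝ, (∀ i, 0 ≤ c i) ∧ ∀ k : ℕ, (A ^ k) j j = ∑ i, c i * hA.eigenvalues i ^ k := by
  refine ⟨fun i => hA.eigenvectorUnitary j i ^ 2, fun i => sq_nonneg _, fun k => ?_⟩
  conv_lhs => rw [hA.spectral_theorem, ← map_pow, Unitary.conjStarAlgAut_apply,
    Matrix.diagonal_pow, Matrix.mul_apply]
  refine sum_congr rfl fun i _ => ?_
  simp only [Matrix.mul_diagonal, Matrix.star_apply, star_trivial, Pi.pow_apply,
    Function.comp_apply, RCLike.ofReal_real_eq_id, id_eq]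
  ring

section PowerSums

variable {ι : Type*} [Fintype ι] {c : ι → ℝ}

theorem sum_mul_pow_le {μ : ι → ℝ} {r : ℝ} (hc : ∀ i, 0 ≤ c i)
    (hμ : ∀ i, c i ≠ 0 → |μ i| ≤ r) (n : ℕ) :
    ∑ i, c i * μ i ^ n ≤ (∑ i, c i) * r ^ n := by
  rw [sum_mul]
  refine sum_le_sum fun i _ => ?_
  rcases eq_or_ne (c i) 0 with hci | hci
  · simp [hci]
  exact mul_le_mul_of_nonneg_left ((le_abs_self _).trans
    (abs_pow (μ i) n ▸ pow_le_pow_left₀ (abs_nonneg _) (hμ i hci) n)) (hc i)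

theorem sub_geometric_le_div_sum_mul_pow {ν : ι → ℝ} {M ρ : ℝ} {i₀ : ι} (hc : ∀ i, 0 ≤ c i)
    (hν : ∀ i, 0 ≤ ν i) (hνM : ∀ i, c i ≠ 0 → ν i ≤ M) (hνρ : ∀ i, c i ≠ 0 → ν i < M → ν i ≤ ρ)
    (hρ : 0 ≤ ρ) (hM : 0 < M) (hi₀ : 0 < c i₀) (hνi₀ : ν i₀ = M) (k : ℕ) :
    M - M * (∑ i, c i) / c i₀ * (ρ / M) ^ k ≤
      (∑ i, c i * ν i ^ (k + 1)) / ∑ i, c i * ν i ^ k := by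
  have hsum : 0 ≤ ∑ i, c i := sum_nonneg fun i _ => hc i
  have hlow : c i₀ * M ^ k ≤ ∑ i, c i * ν i ^ k :=
    hνi₀ ▸ single_le_sum (fun i _ => mul_nonneg (hc i) (pow_nonneg (hν i) k)) (mem_univ i₀)
  have hgap : M * ∑ i, c i * ν i ^ k - ∑ i, c i * ν i ^ (k + 1) ≤ (∑ i, c i) * M * ρ ^ k := by
    rw [mul_sum, ← sum_sub_distrib, sum_mul, sum_mul]
    refine sum_le_sum fun i _ => ?_
    calc M * (c i * ν i ^ k) - c i * ν i ^ (k + 1) = c i * ν i ^ k * (M - ν i) := by ring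
      _ ≤ c i * ρ ^ k * M := ?_
      _ = c i * M * ρ ^ k := by ring
    have hρk : 0 ≤ c i * ρ ^ k := mul_nonneg (hc i) (pow_nonneg hρ k)
    rcases eq_or_ne (c i) 0 with hci | hci
    · simp [hci]
    rcases (hνM i hci).lt_or_eq with hlt | heq
    · exact mul_le_mul (mul_le_mul_of_nonneg_left (pow_le_pow_left₀ (hν i) (hνρ i hci hlt) k)
        (hc i)) (by linarith [hν i]) (by linarith) hρk
    · rw [heq, sub_self, mul_zero]
      exact mul_nonneg hρk hM.le
  have hK : M * (∑ i, c i) / c i₀ * (ρ / M) ^ k * (c i₀ * M ^ k) = (∑ i, c i) * M * ρ ^ k := by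
    rw [div_pow]
    field_simp
  have hKθ : 0 ≤ M * (∑ i, c i) / c i₀ * (ρ / M) ^ k := by positivity
  rw [le_div_iff₀ ((mul_pos hi₀ (pow_pos hM k)).trans_le hlow)]
  linarith [mul_le_mul_of_nonneg_left hlow hKθ]

theorem exists_sub_geometric_le_div_sum_mul_pow {ν : ι → ℝ} (hc : ∀ i, 0 ≤ c i)
    (hν : ∀ i, 0 ≤ ν i) (hpos : 0 < ∑ i, c i * ν i) :
    ∃ M K θ : ℝ, 0 ≤ M ∧ (∀ i, c i ≠ 0 → ν i ≤ M) ∧ 0 ≤ θ ∧ θ < 1 ∧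
      ∀ k : ℕ, M - K * θ ^ k ≤ (∑ i, c i * ν i ^ (k + 1)) / ∑ i, c i * ν i ^ k := by
  classical
  obtain ⟨j, hj⟩ : ∃ j, 0 < c j * ν j := by
    by_contra! h
    exact hpos.not_ge (sum_nonpos fun i _ => h i)
  have hcj : 0 < c j := pos_of_mul_pos_left hj (hν j)
  set J := univ.filter fun i => 0 < c i
  obtain ⟨i₀, hi₀, hmax⟩ := J.exists_max_image ν ⟨j, by simpa [J] using hcj⟩
  set M := ν i₀
  have hνM : ∀ i, c i ≠ 0 → ν i ≤ M := fun i hi =>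
    hmax i (by simpa [J] using (hc i).lt_of_ne' hi)
  have hM : 0 < M := (pos_of_mul_pos_right hj (hc j)).trans_le (hνM j hcj.ne')
  obtain ⟨ρ, hρ, hρM, hνρ⟩ : ∃ ρ, 0 ≤ ρ ∧ ρ < M ∧ ∀ i, c i ≠ 0 → ν i < M → ν i ≤ ρ := by
    refine ⟨(J.filter (ν · < M)).fold max 0 ν, (le_fold_max _).2 (.inl le_rfl),
      (fold_max_lt _).2 ⟨hM, fun i hi => (mem_filter.1 hi).2⟩, fun i hi hiM =>
        (le_fold_max _).2 (.inr ⟨i, ?_, le_rfl⟩)⟩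
    simpa [J, hiM] using (hc i).lt_of_ne' hi
  exact ⟨M, _, ρ / M, hM.le, hνM, by positivity, (div_lt_one hM).2 hρM,
    sub_geometric_le_div_sum_mul_pow hc hν hνM hνρ hρ hM (by simpa [J] using hi₀) rfl⟩

end PowerSums

theorem limsup_rpow_inv_mem_Icc {u : ℕ → ℝ} {r : ℝ} (hu0 : ∀ n, 0 ≤ u n)
    (hur : ∀ n, u n ≤ r ^ n) (hr : 0 ≤ r) :
    limsup (fun n : ℕ => u n ^ (n : ℝ)⁻¹) atTop ∈ Set.Icc 0 r := by
  have hle : ∀ᶠ n : ℕ in atTop, u n ^ (n : ℝ)⁻¹ ≤ r := by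
    filter_upwards [eventually_ne_atTop 0] with n hn
    calc u n ^ (n : ℝ)⁻¹ ≤ (r ^ n) ^ (n : ℝ)⁻¹ := rpow_le_rpow (hu0 n) (hur n) (by positivity)
      _ = r := pow_rpow_inv_natCast hr hn
  have hnonneg : ∀ n : ℕ, 0 ≤ u n ^ (n : ℝ)⁻¹ := fun n => rpow_nonneg (hu0 n) _
  exact ⟨le_limsup_of_frequently_le (.of_forall hnonneg) (isBoundedUnder_of_eventually_le hle),
    limsup_le_of_le (isCoboundedUnder_le_of_le atTop hnonneg) hle⟩

theorem exists_sq_limsup_sub_geometric_le_div {ι : Type*} [Fintype ι] {c μ : ι → ℝ} {d : ℕ → ℕ}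
    (hc : ∀ i, 0 ≤ c i) (hd : ∀ n, (d n : ℝ) = ∑ i, c i * μ i ^ n) (hd0 : d 0 = 1)
    (hd2 : 0 < d 2) :
    ∃ K θ : ℝ, 0 ≤ θ ∧ θ < 1 ∧ ∀ k : ℕ,
      limsup (fun n : ℕ => (d n : ℝ) ^ (n : ℝ)⁻¹) atTop ^ 2 - K * θ ^ k ≤
        (d (2 * k + 2) : ℝ) / d (2 * k) := by
  have heven : ∀ k, (d (2 * k) : ℝ) = ∑ i, c i * (μ i ^ 2) ^ k := fun k => by
    simp_rw [hd, pow_mul]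
  have hpos : 0 < ∑ i, c i * μ i ^ 2 := by
    rw [← hd 2]
    exact_mod_cast hd2
  obtain ⟨M, K, θ, hM, hμM, hθ0, hθ1, hratio⟩ :=
    exists_sub_geometric_le_div_sum_mul_pow hc (fun i => sq_nonneg (μ i)) hpos
  have hsum : ∑ i, c i = 1 := by simpa [hd0] using (hd 0).symm
  have hD := limsup_rpow_inv_mem_Icc (fun n => Nat.cast_nonneg (d n))
    (fun n => (hd n).trans_le <| (sum_mul_pow_le hc (fun i hi => abs_le_sqrt (hμM i hi)) n).trans_eq
      (by rw [hsum, one_mul])) (sqrt_nonneg M)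
  have hD2 := pow_le_pow_left₀ hD.1 hD.2 2
  rw [sq_sqrt hM] at hD2
  refine ⟨K, θ, hθ0, hθ1, fun k => ?_⟩
  rw [show 2 * k + 2 = 2 * (k + 1) by ring, heven, heven]
  linarith [hratio k]

theorem le_div_log_two_mul_log {a : ℝ} (ha : 0 ≤ a) {n : ℕ} (hn : 2 ≤ n) :
    a ≤ a / log 2 * log n := by
  rw [div_mul_eq_mul_div, le_div_iff₀ (log_pos one_lt_two)]
  exact mul_le_mul_of_nonneg_left (log_le_log two_pos (by exact_mod_cast hn)) ha

theorem exists_mul_pow_lt_inv_le_mul_log_of_one_le {K θ : ℝ} (hK : 1 ≤ K) (hθ0 : 0 < θ)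
    (hθ1 : θ < 1) :
    ∃ C : ℝ, 0 < C ∧ ∀ n : ℕ, 2 ≤ n → ∃ k : ℕ, K * θ ^ k < 1 / n ∧ (k : ℝ) ≤ C * log n := by
  set lam := -log θ
  have hlam : 0 < lam := neg_pos.2 (log_neg hθ0 hθ1)
  have hlogK : 0 ≤ log K := log_nonneg hK
  refine ⟨(log K / lam + 1) / log 2 + 1 / lam, by positivity, fun n hn => ?_⟩
  have hn1 : (1 : ℝ) ≤ n := by exact_mod_cast (by omega : 1 ≤ n)
  set x := (log K + log n) / lam
  refine ⟨⌊x⌋₊ + 1, ?_, ?_⟩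
  · have hx : x < ⌊x⌋₊ + 1 := Nat.lt_floor_add_one x
    rw [div_lt_iff₀ hlam] at hx
    rw [← log_lt_log_iff (by positivity) (by positivity), log_mul (by positivity) (by positivity),
      log_pow, one_div, log_inv]
    push_cast
    linarith
  · have hx0 : 0 ≤ x := div_nonneg (add_nonneg hlogK (log_nonneg hn1)) hlam.le
    have := le_div_log_two_mul_log (by positivity : 0 ≤ log K / lam + 1) hn
    calc ((⌊x⌋₊ + 1 : ℕ) : ℝ) ≤ x + 1 := by push_cast; linarith [Nat.floor_le hx0]
      _ = (log K / lam + 1) + 1 / lam * log n := by ring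
      _ ≤ _ := by linarith

theorem exists_mul_pow_lt_inv_le_mul_log (K : ℝ) {θ : ℝ} (hθ0 : 0 ≤ θ) (hθ1 : θ < 1) :
    ∃ C : ℝ, 0 < C ∧ ∀ n : ℕ, 2 ≤ n → ∃ k : ℕ, K * θ ^ k < 1 / n ∧ (k : ℝ) ≤ C * log n := by
  obtain ⟨C, hC, h⟩ := exists_mul_pow_lt_inv_le_mul_log_of_one_le (le_max_right K 1)
    (lt_max_of_lt_right one_half_pos) (max_lt hθ1 one_half_lt_one)
  refine ⟨C, hC, fun n hn => ?_⟩
  obtain ⟨k, hk, hkC⟩ := h n hn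
  refine ⟨k, lt_of_le_of_lt ?_ hk, hkC⟩
  calc K * θ ^ k ≤ max K 1 * θ ^ k := mul_le_mul_of_nonneg_right (le_max_left _ _) (by positivity)
    _ ≤ max K 1 * max θ (1 / 2) ^ k :=
      mul_le_mul_of_nonneg_left (pow_le_pow_left₀ hθ0 (le_max_left _ _) k) (by positivity)

section Cayley

variable {G : Type*} [Group G] (S : Set G)

noncomputable def wordCount (n : ℕ) (x : G) : ℕ :=
  Nat.card {w : Fin n → S // (List.ofFn fun i => (w i : G)).prod = x}

theorem wordCount_succ [Fintype G] (n : ℕ) (x : G) :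
    wordCount S (n + 1) x = ∑ s, S.indicator (fun s => wordCount S n (s⁻¹ * x)) s := by
  classical
  let e : {w : Fin (n + 1) → S // (List.ofFn fun i => (w i : G)).prod = x} ≃
      Σ s : S, {w : Fin n → S // (List.ofFn fun i => (w i : G)).prod = (s : G)⁻¹ * x} :=
    ((Fin.consEquiv fun _ => S).symm.subtypeEquiv fun w => by
        simp [eq_inv_mul_iff_mul_eq, List.ofFn_succ, Fin.consEquiv, Fin.tail]).trans
      (Equiv.subtypeProdEquivSigmaSubtype _)
  change Nat.card _ = _
  rw [Nat.card_congr e, Nat.card_sigma]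
  change ∑ s : S, wordCount S n ((s : G)⁻¹ * x) = _
  rw [Finset.sum_set_coe (f := fun s => wordCount S n (s⁻¹ * x)),
    ← Finset.sum_indicator_subset _ (Finset.subset_univ S.toFinset), Set.coe_toFinset]

noncomputable def cayleyMatrix : Matrix G G ℝ :=
  Matrix.of fun g h => S.indicator 1 (g⁻¹ * h)

theorem cayleyMatrix_pow_apply [Fintype G] [DecidableEq G] (n : ℕ) (g h : G) :
    (cayleyMatrix S ^ n) g h = wordCount S n (g⁻¹ * h) := by
  induction n generalizing g with
  | zero =>
    by_cases hgh : g = h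
    · subst hgh
      simp [wordCount]
    · have : (1 : G) ≠ g⁻¹ * h := by rwa [ne_eq, eq_inv_mul_iff_mul_eq, mul_one]
      simp [wordCount, hgh, this]
  | succ n ih =>
    rw [pow_succ', Matrix.mul_apply, wordCount_succ, Nat.cast_sum,
      ← Equiv.sum_comp (Equiv.mulLeft g) _]
    refine Finset.sum_congr rfl fun s _ => ?_
    rw [Equiv.coe_mulLeft, ih, mul_inv_rev, mul_assoc, cayleyMatrix, Matrix.of_apply,
      inv_mul_cancel_left]
    by_cases hs : s ∈ S <;> simp [hs]

theorem cayleyMatrix_isHermitian {S : Set G} (hsym : ∀ s ∈ S, s⁻¹ ∈ S) :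
    (cayleyMatrix S).IsHermitian := by
  classical
  refine Matrix.IsHermitian.ext fun g h => ?_
  have hmem : h⁻¹ * g ∈ S ↔ g⁻¹ * h ∈ S := by
    constructor <;> intro hx <;> simpa using hsym _ hx
  simp only [cayleyMatrix, Matrix.of_apply, star_trivial, Set.indicator_apply, hmem, Pi.one_apply]

end Cayley

theorem exists_cogrowth_eq_sum {G : Type*} [Group G] [Fintype G] [DecidableEq G] {S : Set G}
    (hsym : ∀ s ∈ S, s⁻¹ ∈ S) :
    ∃ c μ : G → ℝ, (∀ i, 0 ≤ c i) ∧ ∀ n, (cogrowth G S n : ℝ) = ∑ i, c i * μ i ^ n := by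
  obtain ⟨c, hc, h⟩ := (cayleyMatrix_isHermitian hsym).exists_pow_apply_self_eq_sum 1
  refine ⟨c, (cayleyMatrix_isHermitian hsym).eigenvalues, hc, fun n => ?_⟩
  rw [← h, cayleyMatrix_pow_apply, inv_one, one_mul]
  rfl

theorem cogrowth_zero (G : Type*) [Group G] (S : Set G) : cogrowth G S 0 = 1 := by
  simp [cogrowth]

theorem cogrowth_two_pos {G : Type*} [Group G] {S : Set G} [Finite S] (hne : S.Nonempty)
    (hsym : ∀ s ∈ S, s⁻¹ ∈ S) : 0 < cogrowth G S 2 := by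
  obtain ⟨s, hs⟩ := hne
  have : Nonempty {w : Fin 2 → S // (List.ofFn fun i => ((w i : G))).prod = 1} :=
    ⟨⟨![⟨s, hs⟩, ⟨s⁻¹, hsym s hs⟩], by simp [List.ofFn_succ]⟩⟩
  exact Nat.card_pos

theorem Rprime_finite_group_log_general (G : Type*) [Group G] [Finite G] (S : Set G)
    (hne : S.Nonempty) (hsym : ∀ s ∈ S, s⁻¹ ∈ S) :
    ∃ C : ℝ, 0 < C ∧ ∀ n : ℕ, 2 ≤ n → (Rprime G S n : ℝ) ≤ C * Real.log n := by
  classical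
  have := Fintype.ofFinite G
  obtain ⟨c, μ, hc, hd⟩ := exists_cogrowth_eq_sum hsym
  obtain ⟨K, θ, hθ0, hθ1, hratio⟩ :=
    exists_sq_limsup_sub_geometric_le_div hc hd (cogrowth_zero G S) (cogrowth_two_pos hne hsym)
  obtain ⟨C, hC, hlog⟩ := exists_mul_pow_lt_inv_le_mul_log K hθ0 hθ1
  refine ⟨C, hC, fun n hn => ?_⟩
  obtain ⟨k, hkn, hkC⟩ := hlog n hn
  have hk : Rprime G S n ≤ k := Nat.sInf_le <| by
    rw [Set.mem_ofPred_eq, cogrowthRate]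
    linarith [hratio k]
  exact (Nat.cast_le.2 hk).trans hkC

/-- For a finite group `G` with a nonempty finite symmetric generating set `S`,
the function `R′` is at most logarithmic: there is `C > 0` with `R′(n) ≤ C·log n`
for all `n ≥ 2`. -/
theorem Rprime_finite_group_log (G : Type*) [Group G] [Finite G] (S : Set G)
    (hne : S.Nonempty) (hsym : ∀ s ∈ S, s⁻¹ ∈ S) (hgen : Subgroup.closure S = ⊤) :
    ∃ C : ℝ, 0 < C ∧ ∀ n : ℕ, 2 ≤ n → (Rprime G S n : ℝ) ≤ C * Real.log n :=
  Rprime_finite_group_log_general G S hne hsym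
end

section
/- Let G = ℤ be the infinite cyclic group, viewed as the quotient of the free group F({a}) on one generator via a ↦ 1, with symmetric generating set S = {1, −1}. Then (i) c_0 = 1 and c_n = 0 for all n ≥ 1, so C = limsup c_n^{1/n} = 0 and R(n) = 0 for every n ≥ 1; and (ii) the function R′ associated to (ℤ, S) satisfies R′ ∼ n (R′ is asymptotically equivalent to the identity function). In particular, R and R′ are not asymptotically equivalent for the infinite cyclic group. -/
/-- The quotient map realizing `ℤ` as a quotient of the free group on one generator,
sending the generator to `1 ∈ ℤ`. -/
noncomputable def intQuot : FreeGroup Unit →* Multiplicative ℤ :=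
  FreeGroup.lift fun _ => Multiplicative.ofAdd (1 : ℤ)

/-- The standard symmetric generating set `{1, −1}` of `ℤ`. -/
def intGens : Set (Multiplicative ℤ) :=
  {Multiplicative.ofAdd (1 : ℤ), Multiplicative.ofAdd (-1 : ℤ)}

/-! Since `intQuot` is injective, the empty word is the only relator: `c₀ = 1`, `cₙ = 0` for
`n ≥ 1`, hence `C = 0`, and `k = 0` already satisfies the inequality defining `R(n)` because
`c₂ / c₀ = 0 > -1/n`. A word in `±1` multiplies to `0` iff exactly half of its letters are `+1`,
so `d₂ₖ = (2k choose k)` and `d₂ₖ₊₁ = 0`. The bounds `4ᵏ/(2k) ≤ (2k choose k) ≤ 4ᵏ` give `D = 2`,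
and `d₂ₖ₊₂ / d₂ₖ = 4 - 2/(k+1)` exceeds `4 - 1/n` exactly when `k ≥ 2n`, so `R′(n) = 2n`. -/

open Filter Finset Multiplicative Topology

section Injective

variable {X : Type*} [DecidableEq X] {G : Type*} [Group G] {φ : FreeGroup X →* G}

lemma redCogrowth_zero_of_injective (hφ : Function.Injective φ) : redCogrowth φ 0 = 1 := by
  have hrelator : ∀ w : FreeGroup X, ((FreeGroup.toWord w).length = 0 ∧ φ w = 1) ↔ w = 1 :=
    fun w => by
      rw [List.length_eq_zero_iff, FreeGroup.toWord_eq_nil_iff, map_eq_one_iff φ hφ, and_self]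
  rw [redCogrowth, Nat.card_congr (Equiv.subtypeEquivRight hrelator), Nat.card_unique]

lemma redCogrowth_eq_zero_of_injective (hφ : Function.Injective φ) {n : ℕ} (hn : 0 < n) :
    redCogrowth φ n = 0 := by
  rw [redCogrowth, Nat.card_eq_zero]
  refine Or.inl ⟨fun ⟨w, hlen, hw⟩ => ?_⟩
  rw [(map_eq_one_iff φ hφ).mp hw, FreeGroup.toWord_one, List.length_nil] at hlen
  omega

lemma redCogrowthRate_eq_zero_of_injective (hφ : Function.Injective φ) :
    redCogrowthRate φ = 0 := by
  rw [redCogrowthRate, limsup_congr (f := atTop) (v := fun _ => (0 : ℝ)), limsup_const]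
  filter_upwards [eventually_gt_atTop 0] with n hn
  rw [redCogrowth_eq_zero_of_injective hφ hn, Nat.cast_zero, Real.zero_rpow (by positivity)]

lemma RR_eq_zero_of_injective (hφ : Function.Injective φ) {n : ℕ} (hn : 0 < n) :
    RR φ n = 0 := by
  refine Nat.sInf_eq_zero.mpr (Or.inl ?_)
  show (redCogrowth φ 2 : ℝ) / redCogrowth φ 0 > redCogrowthRate φ ^ 2 - 1 / n
  rw [redCogrowthRate_eq_zero_of_injective hφ, redCogrowth_eq_zero_of_injective hφ two_pos]
  simpa using hn

end Injective

lemma intQuot_injective : Function.Injective intQuot := by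
  have hretract : (zpowersHom (FreeGroup Unit) (FreeGroup.of ())).comp intQuot = .id _ :=
    FreeGroup.ext_hom _ _ fun _ => by simp [intQuot]
  exact Function.LeftInverse.injective (g := zpowersHom _ (FreeGroup.of ()))
    (DFunLike.congr_fun hretract)

lemma mem_intGens_iff {s : Multiplicative ℤ} : s ∈ intGens ↔ s = ofAdd 1 ∨ s = ofAdd (-1) :=
  Iff.rfl

lemma ofAdd_one_inv_ne_ofAdd_one : (ofAdd (1 : ℤ))⁻¹ ≠ ofAdd 1 := by
  decide

lemma toAdd_prod_ofFn_intGens {n : ℕ} (w : Fin n → intGens) :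
    toAdd (List.ofFn fun i => (w i : Multiplicative ℤ)).prod
      = 2 * #{i | (w i : Multiplicative ℤ) = ofAdd 1} - n := by
  have hletter : ∀ i, toAdd (w i : Multiplicative ℤ)
      = 2 * (if (w i : Multiplicative ℤ) = ofAdd 1 then 1 else 0) - 1 := fun i => by
    rcases mem_intGens_iff.mp (w i).2 with h | h <;> simp [h, ofAdd_one_inv_ne_ofAdd_one]
  rw [List.prod_ofFn, toAdd_prod, Finset.sum_congr rfl fun i _ => hletter i, sum_sub_distrib,
    ← mul_sum, sum_boole, sum_const, card_univ, Fintype.card_fin]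
  simp

lemma prod_ofFn_intGens_eq_one_iff {n : ℕ} (w : Fin n → intGens) :
    (List.ofFn fun i => (w i : Multiplicative ℤ)).prod = 1
      ↔ 2 * #{i | (w i : Multiplicative ℤ) = ofAdd 1} = n := by
  rw [← toAdd_eq_zero, toAdd_prod_ofFn_intGens]
  omega

def intGensWordEquivFinset (n : ℕ) : (Fin n → intGens) ≃ Finset (Fin n) where
  toFun w := {i | (w i : Multiplicative ℤ) = ofAdd 1}
  invFun s i := if i ∈ s then ⟨ofAdd 1, Or.inl rfl⟩ else ⟨ofAdd (-1), Or.inr rfl⟩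
  left_inv w := by
    funext i
    rcases mem_intGens_iff.mp (w i).2 with h | h <;>
      simp [Subtype.ext_iff, h, ofAdd_one_inv_ne_ofAdd_one]
  right_inv s := by
    ext i
    by_cases hi : i ∈ s <;> simp [hi, ofAdd_one_inv_ne_ofAdd_one]

lemma cogrowth_int (n : ℕ) :
    cogrowth (Multiplicative ℤ) intGens n = Nat.card {s : Finset (Fin n) // 2 * #s = n} :=
  Nat.card_congr <| (intGensWordEquivFinset n).subtypeEquiv prod_ofFn_intGens_eq_one_iff

lemma cogrowth_int_two_mul (k : ℕ) :
    cogrowth (Multiplicative ℤ) intGens (2 * k) = k.centralBinom := by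
  have hhalf : ∀ s : Finset (Fin (2 * k)), 2 * #s = 2 * k ↔ #s = k := fun s => by omega
  rw [cogrowth_int, Nat.card_congr (Equiv.subtypeEquivRight hhalf),
    Nat.card_eq_fintype_card, Fintype.card_finset_len, Fintype.card_fin, Nat.centralBinom]

lemma cogrowth_int_two_mul_add_one (k : ℕ) :
    cogrowth (Multiplicative ℤ) intGens (2 * k + 1) = 0 := by
  rw [cogrowth_int, Nat.card_eq_zero]
  exact Or.inl ⟨fun ⟨s, hs⟩ => by omega⟩

lemma centralBinom_rpow_inv_le_two (k : ℕ) : (k.centralBinom : ℝ) ^ ((2 * k : ℝ)⁻¹) ≤ 2 := by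
  rcases Nat.eq_zero_or_pos k with rfl | hk
  · norm_num
  rw [Real.rpow_inv_le_iff_of_pos (by positivity) zero_le_two (by positivity),
    show (2 * k : ℝ) = (2 * k : ℕ) by push_cast; ring, Real.rpow_natCast, pow_mul]
  exact_mod_cast k.centralBinom_le_four_pow

lemma two_div_rpow_inv_le_centralBinom_rpow_inv {k : ℕ} (hk : 0 < k) :
    2 / (2 * k : ℝ) ^ ((2 * k : ℝ)⁻¹) ≤ (k.centralBinom : ℝ) ^ ((2 * k : ℝ)⁻¹) := by
  have h2k : (0 : ℝ) < 2 * k := by positivity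
  rw [Real.le_rpow_inv_iff_of_pos (by positivity) (by positivity) h2k,
    Real.div_rpow zero_le_two (by positivity), Real.rpow_inv_rpow h2k.le h2k.ne',
    div_le_iff₀ h2k, show (2 * k : ℝ) = (2 * k : ℕ) by push_cast; ring, Real.rpow_natCast,
    pow_mul]
  exact_mod_cast Nat.four_pow_le_two_mul_self_mul_centralBinom k hk |>.trans_eq (by ring)

lemma tendsto_centralBinom_rpow_inv :
    Tendsto (fun k : ℕ => (k.centralBinom : ℝ) ^ ((2 * k : ℝ)⁻¹)) atTop (𝓝 2) := by
  have hroot : Tendsto (fun k : ℕ => (2 * k : ℝ) ^ ((2 * k : ℝ)⁻¹)) atTop (𝓝 1) := by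
    simpa only [one_div, Function.comp_def] using
      tendsto_rpow_div.comp (tendsto_natCast_atTop_atTop.const_mul_atTop two_pos)
  have hlower := (tendsto_const_nhds (x := (2 : ℝ))).div hroot one_ne_zero
  rw [div_one] at hlower
  refine tendsto_of_tendsto_of_tendsto_of_le_of_le' hlower tendsto_const_nhds ?_
    (Eventually.of_forall centralBinom_rpow_inv_le_two)
  filter_upwards [eventually_gt_atTop 0] with k hk
  exact two_div_rpow_inv_le_centralBinom_rpow_inv hk

lemma limsup_eq_of_le_of_tendsto_comp {u : ℕ → ℝ} {c : ℝ} {φ : ℕ → ℕ} (hle : ∀ n, u n ≤ c)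
    (hφ : Tendsto φ atTop atTop) (hlim : Tendsto (u ∘ φ) atTop (𝓝 c)) :
    limsup u atTop = c := by
  have hbounds : {a | ∀ᶠ n in atTop, u n ≤ a} = Set.Ici c := by
    ext a
    refine ⟨fun ha => le_of_tendsto hlim (hφ.eventually ha), fun ha => ?_⟩
    exact Eventually.of_forall fun n => (hle n).trans ha
  rw [limsup_eq, hbounds, csInf_Ici]

lemma cogrowth_int_rpow_inv_le_two (n : ℕ) :
    (cogrowth (Multiplicative ℤ) intGens n : ℝ) ^ (n : ℝ)⁻¹ ≤ 2 := by
  obtain ⟨k, rfl | rfl⟩ := Nat.even_or_odd' n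
  · simpa [cogrowth_int_two_mul] using centralBinom_rpow_inv_le_two k
  · rw [cogrowth_int_two_mul_add_one, Nat.cast_zero, Real.zero_rpow (by positivity)]
    exact zero_le_two

lemma cogrowthRate_int : cogrowthRate (Multiplicative ℤ) intGens = 2 := by
  refine limsup_eq_of_le_of_tendsto_comp cogrowth_int_rpow_inv_le_two
    (tendsto_id.const_mul_atTop' two_pos) ?_
  simpa [Function.comp_def, cogrowth_int_two_mul] using tendsto_centralBinom_rpow_inv

lemma four_sub_centralBinom_succ_div (k : ℕ) :
    4 - ((k + 1).centralBinom : ℝ) / k.centralBinom = 2 / (k + 1) := by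
  have hrec : ((k : ℝ) + 1) * (k + 1).centralBinom = 2 * (2 * k + 1) * k.centralBinom := by
    exact_mod_cast k.succ_mul_centralBinom_succ
  have hpos : (0 : ℝ) < k.centralBinom := by exact_mod_cast k.centralBinom_pos
  field_simp
  linarith

lemma Rprime_int {n : ℕ} (hn : 0 < n) : Rprime (Multiplicative ℤ) intGens n = 2 * n := by
  have hthreshold : ∀ k : ℕ, (cogrowth (Multiplicative ℤ) intGens (2 * k + 2) : ℝ) /
      cogrowth (Multiplicative ℤ) intGens (2 * k) > 2 ^ 2 - 1 / (n : ℝ) ↔ 2 * n ≤ k := by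
    intro k
    rw [show 2 * k + 2 = 2 * (k + 1) by ring, cogrowth_int_two_mul, cogrowth_int_two_mul,
      gt_iff_lt, sub_lt_comm, show (2 : ℝ) ^ 2 = 4 by norm_num, four_sub_centralBinom_succ_div,
      div_lt_div_iff₀ (by positivity) (by positivity)]
    norm_cast
    omega
  simp_rw [Rprime, cogrowthRate_int, hthreshold]
  exact csInf_Ici

lemma asympEquiv_self_of_eventuallyEq_const_mul {f : ℕ → ℝ} {c : ℝ} (hc : 0 < c)
    (hf : ∀ᶠ n in atTop, f n = c * n) : AsympEquiv f fun n => n := by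
  refine ⟨⟨c, 1, hc, one_pos, ?_⟩, ⟨c⁻¹, 1, inv_pos.mpr hc, one_pos, ?_⟩⟩ <;>
    filter_upwards [hf] with n hn <;> simp [hn, hc.ne']

lemma not_asympLE_of_eventually_eq_zero {f g : ℕ → ℝ} (hf : ∀ᶠ n in atTop, 0 < f n)
    (hg : ∀ᶠ n in atTop, g n = 0) : ¬ AsympLE f g := by
  rintro ⟨a, b, -, hb, hle⟩
  have hceil : Tendsto (fun n : ℕ => ⌈b * n⌉₊) atTop atTop :=
    tendsto_nat_ceil_atTop.comp (tendsto_natCast_atTop_atTop.const_mul_atTop hb)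
  obtain ⟨n, hfn, hfg, hgn⟩ := (hf.and (hle.and (hceil.eventually hg))).exists
  simp only [hgn, mul_zero] at hfg
  linarith

/-- For the infinite cyclic group `ℤ`: (i) `c₀ = 1`, `cₙ = 0` for `n ≥ 1`, so
`C = limsup cₙ^{1/n} = 0` and `R(n) = 0` for all `n ≥ 1`; (ii) `R′ ∼ n`.
In particular `R` and `R′` are not asymptotically equivalent. -/
theorem int_R_and_Rprime :
    redCogrowth intQuot 0 = 1 ∧
    (∀ n : ℕ, 1 ≤ n → redCogrowth intQuot n = 0) ∧
    redCogrowthRate intQuot = 0 ∧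
    (∀ n : ℕ, 1 ≤ n → RR intQuot n = 0) ∧
    AsympEquiv (fun n : ℕ => (Rprime (Multiplicative ℤ) intGens n : ℝ))
      (fun n : ℕ => (n : ℝ)) ∧
    ¬ AsympEquiv (fun n : ℕ => (RR intQuot n : ℝ))
      (fun n : ℕ => (Rprime (Multiplicative ℤ) intGens n : ℝ)) := by
  have hRprime : ∀ᶠ n : ℕ in atTop, (Rprime (Multiplicative ℤ) intGens n : ℝ) = 2 * n := by
    filter_upwards [eventually_gt_atTop 0] with n hn
    exact_mod_cast Rprime_int hn
  have hRR : ∀ᶠ n : ℕ in atTop, (RR intQuot n : ℝ) = 0 := by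
    filter_upwards [eventually_gt_atTop 0] with n hn
    exact_mod_cast RR_eq_zero_of_injective intQuot_injective hn
  refine ⟨redCogrowth_zero_of_injective intQuot_injective,
    fun _ => redCogrowth_eq_zero_of_injective intQuot_injective,
    redCogrowthRate_eq_zero_of_injective intQuot_injective,
    fun _ => RR_eq_zero_of_injective intQuot_injective,
    asympEquiv_self_of_eventuallyEq_const_mul two_pos hRprime, fun h => ?_⟩
  refine not_asympLE_of_eventually_eq_zero ?_ hRR h.2
  filter_upwards [hRprime, eventually_gt_atTop 0] with n hn hpos
  rw [hn]
  positivity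
end
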